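/- arXiv:2006.06127 — 5 statements merged into one kernel-verified Lean document; each statement's English description precedes it below -/
import Mathlib

section
/- Let π be a group. Sending 1 ⊗ g to the generator indexed by g induces a short exact sequence of ℤπ-modules 0 → Γ(ℤπ) → ℤπ ⊗_ℤ ℤπ → (⨁_{g ∈ π, g² ≠ 1} ℤπ) ⊕ (⨁_{g² = 1, g ≠ 1} ℤπ/(1+g)) → 0, where ℤπ ⊗_ℤ ℤπ carries the diagonal left π-action, Γ(ℤπ) denotes the subgroup of symmetric tensors, and the direct sum ranges over elements of π modulo inversion (one term per pair {g, g⁻¹}). -/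
noncomputable section

open scoped TensorProduct DirectSum

open MonoidAlgebra

/-- `Γ(ℤπ)`: the subgroup of symmetric tensors of `ℤπ ⊗_ℤ ℤπ`, generated by the `a ⊗ a`. -/
def symGA (π : Type*) [Group π] : AddSubgroup (MonoidAlgebra ℤ π ⊗[ℤ] MonoidAlgebra ℤ π) :=
  AddSubgroup.closure {x | ∃ a : MonoidAlgebra ℤ π, x = a ⊗ₜ[ℤ] a}

namespace GammaSES

variable {π : Type*} [Group π] [DecidableEq π] (S : Set π)

abbrev Qt (g : π) : Type _ :=
  MonoidAlgebra ℤ π ⧸ Ideal.span {(1 : MonoidAlgebra ℤ π) + of ℤ π g}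

abbrev X : Type _ :=
  ({x : π // x ∈ S ∧ x * x ≠ 1} →₀ MonoidAlgebra ℤ π) ×
    (⨁ g : {x : π // x ∈ S ∧ x * x = 1}, Qt g.1)

variable {S}

theorem inv_props (h2 : ∀ g : π, g ≠ 1 → g ∈ S ∨ g⁻¹ ∈ S)
    {k : π} (hk : ¬ k = 1) (hkS : ¬ k ∈ S) : k⁻¹ ∈ S ∧ k⁻¹ * k⁻¹ ≠ 1 := by
  have hS : k⁻¹ ∈ S := (h2 k hk).resolve_left hkS
  refine ⟨hS, fun hsq => hkS ?_⟩
  have hkk : k⁻¹ = k := by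
    have h' := inv_eq_of_mul_eq_one_right hsq
    rw [inv_inv] at h'
    exact h'.symm
  rwa [hkk] at hS

variable (S) in
open Classical in
/-- value of φ at `1 ⊗ k`. -/
def F0 (h2 : ∀ g : π, g ≠ 1 → g ∈ S ∨ g⁻¹ ∈ S) (k : π) : X S :=
  if hk : k = 1 then 0
  else if hkS : k ∈ S then
    if hk2 : k * k = 1 then
      (0, DirectSum.of (fun g : {x : π // x ∈ S ∧ x * x = 1} => Qt g.1)
        ⟨k, hkS, hk2⟩ (Submodule.Quotient.mk 1))
    else (Finsupp.single ⟨k, hkS, hk2⟩ (1 : MonoidAlgebra ℤ π), 0)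
  else
    (-(of ℤ π k • Finsupp.single ⟨k⁻¹, inv_props h2 hk hkS⟩ (1 : MonoidAlgebra ℤ π)), 0)

section Fcases
variable (h2 : ∀ g : π, g ≠ 1 → g ∈ S ∨ g⁻¹ ∈ S)

theorem F0_one : F0 S h2 1 = 0 := by rw [F0, dif_pos rfl]

theorem F0_S1 {k : π} (hkS : k ∈ S) (hk2 : k * k ≠ 1) :
    F0 S h2 k = (Finsupp.single ⟨k, hkS, hk2⟩ (1 : MonoidAlgebra ℤ π), 0) := by
  have hk : ¬ k = 1 := fun e => hk2 (by rw [e, one_mul])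
  rw [F0, dif_neg hk, dif_pos hkS, dif_neg hk2]

theorem F0_S2 {k : π} (hkS : k ∈ S) (hk2 : k * k = 1) (hk : k ≠ 1) :
    F0 S h2 k = (0, DirectSum.of (fun g : {x : π // x ∈ S ∧ x * x = 1} => Qt g.1)
        ⟨k, hkS, hk2⟩ (Submodule.Quotient.mk 1)) := by
  rw [F0, dif_neg hk, dif_pos hkS, dif_pos hk2]

theorem F0_not {k : π} (hk : ¬ k = 1) (hkS : ¬ k ∈ S) :
    F0 S h2 k =
      (-(of ℤ π k • Finsupp.single ⟨k⁻¹, inv_props h2 hk hkS⟩ (1 : MonoidAlgebra ℤ π)), 0) := by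
  rw [F0, dif_neg hk, dif_neg hkS]

end Fcases

variable (S) in
def F (h2 : ∀ g : π, g ≠ 1 → g ∈ S ∨ g⁻¹ ∈ S) (g h : π) : X S :=
  of ℤ π g • F0 S h2 (g⁻¹ * h)

variable (S) in
def Bmap (h2 : ∀ g : π, g ≠ 1 → g ∈ S ∨ g⁻¹ ∈ S) :
    MonoidAlgebra ℤ π →ₗ[ℤ] MonoidAlgebra ℤ π →ₗ[ℤ] X S :=
  (Finsupp.lsum ℤ fun g =>
    LinearMap.toSpanSingleton ℤ _
      ((Finsupp.lsum ℤ fun h => LinearMap.toSpanSingleton ℤ _ (F S h2 g h)) ∘ₗ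
        (MonoidAlgebra.coeffLinearEquiv ℤ).toLinearMap)) ∘ₗ
    (MonoidAlgebra.coeffLinearEquiv ℤ).toLinearMap

variable (S) in
def phi (h2 : ∀ g : π, g ≠ 1 → g ∈ S ∨ g⁻¹ ∈ S) :
    (MonoidAlgebra ℤ π ⊗[ℤ] MonoidAlgebra ℤ π) →+ X S :=
  (TensorProduct.lift (Bmap S h2)).toAddMonoidHom

variable (h2 : ∀ g : π, g ≠ 1 → g ∈ S ∨ g⁻¹ ∈ S)

theorem phi_of (g h : π) : phi S h2 (of ℤ π g ⊗ₜ[ℤ] of ℤ π h) = F S h2 g h := by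
  show TensorProduct.lift (Bmap S h2)
    (MonoidAlgebra.single g 1 ⊗ₜ[ℤ] MonoidAlgebra.single h 1) = _
  rw [TensorProduct.lift.tmul, Bmap]
  simp

end GammaSES

namespace GammaSES

variable {π : Type*} [Group π] [DecidableEq π] {S : Set π}
variable (h2 : ∀ g : π, g ≠ 1 → g ∈ S ∨ g⁻¹ ∈ S)

theorem F_diag (g : π) : F S h2 g g = 0 := by
  rw [F, inv_mul_cancel, F0_one, smul_zero]

theorem F_S1 {g h : π} (hkS : g⁻¹ * h ∈ S) (hk2 : (g⁻¹ * h) * (g⁻¹ * h) ≠ 1) :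
    F S h2 g h = (Finsupp.single ⟨g⁻¹ * h, hkS, hk2⟩ (of ℤ π g), 0) := by
  rw [F, F0_S1 h2 hkS hk2, Prod.smul_mk, Finsupp.smul_single, smul_zero, smul_eq_mul, mul_one]

theorem F_S2 {g h : π} (hkS : g⁻¹ * h ∈ S) (hk2 : (g⁻¹ * h) * (g⁻¹ * h) = 1)
    (hk : g⁻¹ * h ≠ 1) :
    F S h2 g h = (0, DirectSum.of (fun g : {x : π // x ∈ S ∧ x * x = 1} => Qt g.1)
      ⟨g⁻¹ * h, hkS, hk2⟩ (Submodule.Quotient.mk (of ℤ π g))) := by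
  rw [F, F0_S2 h2 hkS hk2 hk, Prod.smul_mk, smul_zero, ← DirectSum.of_smul,
    ← Submodule.Quotient.mk_smul, smul_eq_mul, mul_one]

theorem F_not {g h : π} (hk : ¬ g⁻¹ * h = 1) (hkS : ¬ g⁻¹ * h ∈ S) :
    F S h2 g h =
      (-Finsupp.single ⟨(g⁻¹ * h)⁻¹, inv_props h2 hk hkS⟩ (of ℤ π h), 0) := by
  rw [F, F0_not h2 hk hkS, Prod.smul_mk, smul_zero, smul_neg, smul_smul, ← map_mul,
    mul_inv_cancel_left, Finsupp.smul_single, smul_eq_mul, mul_one]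

theorem F_antisym (h3 : ∀ g ∈ S, g⁻¹ ∈ S → g⁻¹ = g) (g h : π) :
    F S h2 g h + F S h2 h g = 0 := by
  have hk' : h⁻¹ * g = (g⁻¹ * h)⁻¹ := by rw [mul_inv_rev, inv_inv]
  by_cases hk : g⁻¹ * h = 1
  · have hgh : g = h := inv_mul_eq_one.mp hk
    subst hgh
    rw [F_diag, add_zero]
  · by_cases hkS : g⁻¹ * h ∈ S
    · by_cases hk2 : (g⁻¹ * h) * (g⁻¹ * h) = 1
      · -- involution case
        have hinv : (g⁻¹ * h)⁻¹ = g⁻¹ * h := inv_eq_of_mul_eq_one_right hk2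
        have hkS' : h⁻¹ * g ∈ S := by rw [hk', hinv]; exact hkS
        have hk2' : (h⁻¹ * g) * (h⁻¹ * g) = 1 := by rw [hk', hinv]; exact hk2
        have hk1' : h⁻¹ * g ≠ 1 := by rw [hk', hinv]; exact hk
        rw [F_S2 h2 hkS hk2 hk, F_S2 h2 hkS' hk2' hk1']
        have hidx : (⟨h⁻¹ * g, hkS', hk2'⟩ : {x : π // x ∈ S ∧ x * x = 1})
            = ⟨g⁻¹ * h, hkS, hk2⟩ :=
          Subtype.ext (show h⁻¹ * g = g⁻¹ * h by rw [hk', hinv])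
        rw [hidx, Prod.mk_add_mk, add_zero, ← map_add, ← Submodule.Quotient.mk_add]
        have hmem : of ℤ π g + of ℤ π h ∈
            Ideal.span {(1 : MonoidAlgebra ℤ π) + of ℤ π (g⁻¹ * h)} := by
          have : of ℤ π g + of ℤ π h
              = of ℤ π g * ((1 : MonoidAlgebra ℤ π) + of ℤ π (g⁻¹ * h)) := by
            rw [mul_add, mul_one, ← map_mul, mul_inv_cancel_left]
          rw [this, ← smul_eq_mul]
          exact Submodule.smul_mem _ _ (Submodule.mem_span_singleton_self _)
        rw [(Submodule.Quotient.mk_eq_zero _).mpr hmem, map_zero, Prod.mk_zero_zero]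
      · -- k in S, k*k ≠ 1
        have hkS' : ¬ h⁻¹ * g ∈ S := by
          rw [hk']
          intro hc
          have hkk := h3 _ hkS hc
          exact hk2 (by nth_rewrite 1 [← hkk]; exact inv_mul_cancel _)
        have hk1' : ¬ h⁻¹ * g = 1 := by
          rw [hk', inv_eq_one]; exact hk
        rw [F_S1 h2 hkS hk2, F_not h2 hk1' hkS']
        have hidx : (⟨(h⁻¹ * g)⁻¹, inv_props h2 hk1' hkS'⟩ : {x : π // x ∈ S ∧ x * x ≠ 1})
            = ⟨g⁻¹ * h, hkS, hk2⟩ :=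
          Subtype.ext (show (h⁻¹ * g)⁻¹ = g⁻¹ * h by rw [hk', inv_inv])
        rw [hidx, Prod.mk_add_mk, add_zero, add_neg_cancel, Prod.mk_zero_zero]
    · -- k not in S
      have hkS' : h⁻¹ * g ∈ S := by rw [hk']; exact (inv_props h2 hk hkS).1
      have hk2' : (h⁻¹ * g) * (h⁻¹ * g) ≠ 1 := by rw [hk']; exact (inv_props h2 hk hkS).2
      rw [F_not h2 hk hkS, F_S1 h2 hkS' hk2']
      have hidx : (⟨(g⁻¹ * h)⁻¹, inv_props h2 hk hkS⟩ : {x : π // x ∈ S ∧ x * x ≠ 1})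
          = ⟨h⁻¹ * g, hkS', hk2'⟩ :=
        Subtype.ext (show (g⁻¹ * h)⁻¹ = h⁻¹ * g by rw [hk'])
      rw [hidx, Prod.mk_add_mk, add_zero, neg_add_cancel, Prod.mk_zero_zero]

end GammaSES

namespace GammaSES

variable {π : Type*} [Group π] [DecidableEq π] {S : Set π}
variable (h2 : ∀ g : π, g ≠ 1 → g ∈ S ∨ g⁻¹ ∈ S)

theorem diag_mem (a : MonoidAlgebra ℤ π) : a ⊗ₜ[ℤ] a ∈ symGA π :=
  AddSubgroup.subset_closure ⟨a, rfl⟩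

theorem pair_mem (a b : MonoidAlgebra ℤ π) : a ⊗ₜ[ℤ] b + b ⊗ₜ[ℤ] a ∈ symGA π := by
  have h : a ⊗ₜ[ℤ] b + b ⊗ₜ[ℤ] a
      = (a + b) ⊗ₜ[ℤ] (a + b) - a ⊗ₜ[ℤ] a - b ⊗ₜ[ℤ] b := by
    rw [TensorProduct.add_tmul, TensorProduct.tmul_add, TensorProduct.tmul_add]
    abel
  rw [h]
  exact sub_mem (sub_mem (diag_mem _) (diag_mem _)) (diag_mem _)

theorem phi_antisym (h3 : ∀ g ∈ S, g⁻¹ ∈ S → g⁻¹ = g) (x y : MonoidAlgebra ℤ π) :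
    phi S h2 (x ⊗ₜ[ℤ] y) + phi S h2 (y ⊗ₜ[ℤ] x) = 0 := by
  induction x using MonoidAlgebra.induction_on with
  | of g =>
    induction y using MonoidAlgebra.induction_on with
    | of h => rw [phi_of, phi_of]; exact F_antisym h2 h3 g h
    | add a b ha hb =>
      rw [TensorProduct.tmul_add, TensorProduct.add_tmul, map_add, map_add,
        add_add_add_comm, ha, hb, add_zero]
    | smul r a ha =>
      rw [TensorProduct.tmul_smul, ← TensorProduct.smul_tmul', map_zsmul, map_zsmul,
        ← smul_add, ha, smul_zero]
  | add a b ha hb =>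
    rw [TensorProduct.tmul_add, TensorProduct.add_tmul, map_add, map_add,
      add_add_add_comm, ha, hb, add_zero]
  | smul r a ha =>
    rw [TensorProduct.tmul_smul, ← TensorProduct.smul_tmul', map_zsmul, map_zsmul,
      ← smul_add, ha, smul_zero]

theorem phi_diag (h3 : ∀ g ∈ S, g⁻¹ ∈ S → g⁻¹ = g) (a : MonoidAlgebra ℤ π) :
    phi S h2 (a ⊗ₜ[ℤ] a) = 0 := by
  induction a using MonoidAlgebra.induction_on with
  | of g => rw [phi_of, F_diag]
  | add a b ha hb =>
    rw [TensorProduct.add_tmul, TensorProduct.tmul_add, TensorProduct.tmul_add,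
      map_add, map_add, map_add, ha, hb, zero_add, add_zero]
    exact phi_antisym h2 h3 a b
  | smul r a ha =>
    rw [TensorProduct.tmul_smul, ← TensorProduct.smul_tmul', map_zsmul, map_zsmul,
      ha, smul_zero, smul_zero]

def mkQ : (MonoidAlgebra ℤ π ⊗[ℤ] MonoidAlgebra ℤ π) →+
    (MonoidAlgebra ℤ π ⊗[ℤ] MonoidAlgebra ℤ π) ⧸ symGA π :=
  QuotientAddGroup.mk' (symGA π)

theorem mkQ_eq_zero {x : MonoidAlgebra ℤ π ⊗[ℤ] MonoidAlgebra ℤ π} :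
    (mkQ x = 0) ↔ x ∈ symGA π := QuotientAddGroup.eq_zero_iff x

def sQ1 (k : π) : MonoidAlgebra ℤ π →+
    (MonoidAlgebra ℤ π ⊗[ℤ] MonoidAlgebra ℤ π) ⧸ symGA π :=
  (Finsupp.liftAddHom fun g => zmultiplesHom _ (mkQ (of ℤ π g ⊗ₜ[ℤ] of ℤ π (g * k)))).comp
    (MonoidAlgebra.coeffAddEquiv (R := ℤ) (M := π)).toAddMonoidHom

theorem sQ1_of (k g : π) : sQ1 k (of ℤ π g) = mkQ (of ℤ π g ⊗ₜ[ℤ] of ℤ π (g * k)) := by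
  show sQ1 k (MonoidAlgebra.single g 1) = _
  rw [sQ1]
  simp [MonoidAlgebra.coeffAddEquiv]

theorem sQ1_mul {k : π} (hk2 : k * k = 1) (a : MonoidAlgebra ℤ π) :
    sQ1 k (a * ((1 : MonoidAlgebra ℤ π) + of ℤ π k)) = 0 := by
  induction a using MonoidAlgebra.induction_on with
  | of g =>
    rw [mul_add, mul_one, ← map_mul, map_add, sQ1_of, sQ1_of, ← map_add,
      mul_assoc, hk2, mul_one]
    exact mkQ_eq_zero.mpr (pair_mem _ _)
  | add a b ha hb => rw [add_mul, map_add, ha, hb, add_zero]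
  | smul r a ha => rw [smul_mul_assoc, map_zsmul, ha, smul_zero]

def qlift (k : π) (hk2 : k * k = 1) :
    Qt (π := π) k →+ (MonoidAlgebra ℤ π ⊗[ℤ] MonoidAlgebra ℤ π) ⧸ symGA π :=
  ((Submodule.liftQ
      ((Ideal.span {(1 : MonoidAlgebra ℤ π) + of ℤ π k}).restrictScalars ℤ)
      (sQ1 k).toIntLinearMap (by
        intro x hx
        rw [Submodule.restrictScalars_mem] at hx
        obtain ⟨a, rfl⟩ := Submodule.mem_span_singleton.mp hx
        rw [LinearMap.mem_ker, AddMonoidHom.coe_toIntLinearMap, smul_eq_mul]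
        exact sQ1_mul hk2 a)).comp
    (Submodule.Quotient.restrictScalarsEquiv ℤ
      (Ideal.span {(1 : MonoidAlgebra ℤ π) + of ℤ π k})).symm.toLinearMap).toAddMonoidHom

theorem qlift_mk (k : π) (hk2 : k * k = 1) (x : MonoidAlgebra ℤ π) :
    qlift k hk2 (Submodule.Quotient.mk x) = sQ1 k x := by
  rfl

variable (S) in
def shat : X S →+ (MonoidAlgebra ℤ π ⊗[ℤ] MonoidAlgebra ℤ π) ⧸ symGA π :=
  AddMonoidHom.coprod (Finsupp.liftAddHom fun k => sQ1 k.1)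
    (DirectSum.toAddMonoid fun k => qlift k.1 k.2.2)

theorem shat_single (k : {x : π // x ∈ S ∧ x * x ≠ 1}) (x : MonoidAlgebra ℤ π) :
    shat S ((Finsupp.single k x, 0) : X S) = sQ1 k.1 x := by
  rw [shat, AddMonoidHom.coprod_apply, map_zero, add_zero, Finsupp.liftAddHom_apply_single]

theorem shat_of (k : {x : π // x ∈ S ∧ x * x = 1}) (q : Qt (π := π) k.1) :
    shat S ((0, DirectSum.of (fun g : {x : π // x ∈ S ∧ x * x = 1} => Qt g.1) k q) : X S)
      = qlift k.1 k.2.2 q := by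
  rw [shat, AddMonoidHom.coprod_apply, map_zero, zero_add, DirectSum.toAddMonoid_of]

end GammaSES

namespace GammaSES

variable {π : Type*} [Group π] [DecidableEq π] {S : Set π}
variable (h2 : ∀ g : π, g ≠ 1 → g ∈ S ∨ g⁻¹ ∈ S)

theorem sphi_of (g h : π) :
    shat S (phi S h2 (of ℤ π g ⊗ₜ[ℤ] of ℤ π h)) = mkQ (of ℤ π g ⊗ₜ[ℤ] of ℤ π h) := by
  rw [phi_of]
  by_cases hk : g⁻¹ * h = 1
  · have hgh : g = h := inv_mul_eq_one.mp hk
    subst hgh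
    rw [F_diag, map_zero]
    exact (mkQ_eq_zero.mpr (diag_mem _)).symm
  · by_cases hkS : g⁻¹ * h ∈ S
    · by_cases hk2 : (g⁻¹ * h) * (g⁻¹ * h) = 1
      · rw [F_S2 h2 hkS hk2 hk, shat_of, qlift_mk, sQ1_of, mul_inv_cancel_left]
      · rw [F_S1 h2 hkS hk2, shat_single, sQ1_of, mul_inv_cancel_left]
    · rw [F_not h2 hk hkS]
      have hneg : ((-Finsupp.single ⟨(g⁻¹ * h)⁻¹, inv_props h2 hk hkS⟩ (of ℤ π h), 0) : X S)
          = -(Finsupp.single ⟨(g⁻¹ * h)⁻¹, inv_props h2 hk hkS⟩ (of ℤ π h),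
              (0 : ⨁ g : {x : π // x ∈ S ∧ x * x = 1}, Qt g.1)) := by
        rw [Prod.neg_mk, neg_zero]
      rw [hneg, map_neg (shat S), shat_single, sQ1_of]
      have hmul : h * (g⁻¹ * h)⁻¹ = g := by rw [mul_inv_rev, inv_inv, mul_inv_cancel_left]
      rw [hmul]
      refine (eq_neg_of_add_eq_zero_left ?_).symm
      rw [← map_add]
      exact mkQ_eq_zero.mpr (pair_mem _ _)

theorem sphi (x : MonoidAlgebra ℤ π ⊗[ℤ] MonoidAlgebra ℤ π) :
    shat S (phi S h2 x) = mkQ x := by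
  induction x using TensorProduct.induction_on with
  | zero => simp
  | add a b ha hb => rw [map_add, map_add, map_add, ha, hb]
  | tmul a b =>
    induction a using MonoidAlgebra.induction_on with
    | of g =>
      induction b using MonoidAlgebra.induction_on with
      | of h => exact sphi_of h2 g h
      | add a b ha hb => rw [TensorProduct.tmul_add, map_add, map_add, map_add, ha, hb]
      | smul r a ha => rw [TensorProduct.tmul_smul, map_zsmul, map_zsmul, map_zsmul (shat S), ha]
    | add a b ha hb => rw [TensorProduct.add_tmul, map_add, map_add, map_add, ha, hb]
    | smul r a ha => rw [← TensorProduct.smul_tmul', map_zsmul, map_zsmul, map_zsmul (shat S), ha]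

theorem phi_ker (h3 : ∀ g ∈ S, g⁻¹ ∈ S → g⁻¹ = g)
    (x : MonoidAlgebra ℤ π ⊗[ℤ] MonoidAlgebra ℤ π) :
    phi S h2 x = 0 ↔ x ∈ symGA π := by
  constructor
  · intro hx
    have hs := sphi h2 x
    rw [hx, map_zero] at hs
    exact mkQ_eq_zero.mp hs.symm
  · intro hx
    refine AddSubgroup.closure_induction ?_ ?_ ?_ ?_ hx
    · rintro y ⟨a, rfl⟩
      exact phi_diag h2 h3 a
    · exact map_zero _
    · intro a b _ _ ha hb; rw [map_add, ha, hb, add_zero]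
    · intro a _ ha; rw [map_neg, ha]; exact neg_zero (G := X S)

theorem phi_surj (h1 : (1 : π) ∉ S) : Function.Surjective (phi S h2) := by
  have hmem1 : ∀ (k : {x : π // x ∈ S ∧ x * x ≠ 1}) (x : MonoidAlgebra ℤ π),
      ((Finsupp.single k x, 0) : X S) ∈ (phi S h2).range := by
    intro k x
    induction x using MonoidAlgebra.induction_on with
    | of g =>
      have e : g⁻¹ * (g * k.1) = k.1 := inv_mul_cancel_left g k.1
      have hS : g⁻¹ * (g * k.1) ∈ S := by rw [e]; exact k.2.1
      have hn : (g⁻¹ * (g * k.1)) * (g⁻¹ * (g * k.1)) ≠ 1 := by rw [e]; exact k.2.2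
      refine ⟨of ℤ π g ⊗ₜ[ℤ] of ℤ π (g * k.1), ?_⟩
      rw [phi_of, F_S1 h2 hS hn]
      have hidx : (⟨g⁻¹ * (g * k.1), hS, hn⟩ : {x : π // x ∈ S ∧ x * x ≠ 1}) = k :=
        Subtype.ext e
      rw [hidx]
    | add a b ha hb =>
      simpa [Finsupp.single_add, Prod.mk_add_mk] using add_mem ha hb
    | smul r a ha =>
      simpa [Finsupp.smul_single] using AddSubgroup.zsmul_mem _ ha r
  have hmem2 : ∀ d : ⨁ g : {x : π // x ∈ S ∧ x * x = 1}, Qt g.1,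
      ((0, d) : X S) ∈ (phi S h2).range := by
    intro d
    induction d using DirectSum.induction_on with
    | zero => rw [Prod.mk_zero_zero]; exact zero_mem _
    | of k q =>
      obtain ⟨x, rfl⟩ := Submodule.Quotient.mk_surjective _ q
      induction x using MonoidAlgebra.induction_on with
      | of g =>
        have e : g⁻¹ * (g * k.1) = k.1 := inv_mul_cancel_left g k.1
        have hS : g⁻¹ * (g * k.1) ∈ S := by rw [e]; exact k.2.1
        have hi : (g⁻¹ * (g * k.1)) * (g⁻¹ * (g * k.1)) = 1 := by rw [e]; exact k.2.2
        have hne : g⁻¹ * (g * k.1) ≠ 1 := by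
          rw [e]; exact fun hc => h1 (hc ▸ k.2.1)
        refine ⟨of ℤ π g ⊗ₜ[ℤ] of ℤ π (g * k.1), ?_⟩
        rw [phi_of, F_S2 h2 hS hi hne]
        have hidx : (⟨g⁻¹ * (g * k.1), hS, hi⟩ : {x : π // x ∈ S ∧ x * x = 1}) = k :=
          Subtype.ext e
        rw [hidx]
      | add a b ha hb =>
        simpa [Submodule.Quotient.mk_add, map_add, Prod.mk_add_mk] using add_mem ha hb
      | smul r a ha =>
        have hq : (Submodule.Quotient.mk (r • a) : Qt k.1)
            = r • Submodule.Quotient.mk a := Submodule.Quotient.mk_smul _ r a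
        rw [hq, DirectSum.of_smul]
        simpa using AddSubgroup.zsmul_mem _ ha r
    | add a b ha hb =>
      simpa [Prod.mk_add_mk] using add_mem ha hb
  rintro ⟨y1, y2⟩
  have hy1 : ((y1, 0) : X S) ∈ (phi S h2).range := by
    induction y1 using Finsupp.induction with
    | zero => rw [Prod.mk_zero_zero]; exact zero_mem _
    | single_add k x f _ _ ih =>
      simpa [Prod.mk_add_mk] using add_mem (hmem1 k x) ih
  obtain ⟨u, hu⟩ := hy1
  obtain ⟨v, hv⟩ := hmem2 y2
  exact ⟨u + v, by rw [map_add, hu, hv, Prod.mk_add_mk, add_zero, zero_add]⟩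

theorem phi_one_tmul (k : π) :
    phi S h2 ((1 : MonoidAlgebra ℤ π) ⊗ₜ[ℤ] of ℤ π k) = F0 S h2 k := by
  rw [show (1 : MonoidAlgebra ℤ π) ⊗ₜ[ℤ] of ℤ π k = of ℤ π 1 ⊗ₜ[ℤ] of ℤ π k from by
    rw [map_one], phi_of, F, map_one, one_smul, inv_one, one_mul]

end GammaSES


open GammaSES in
/-- sending `1 ⊗ g` to the generator indexed by `g` induces a short exact sequence
of `ℤπ`-modules
`0 → Γ(ℤπ) → ℤπ ⊗_ℤ ℤπ → (⨁_{g² ≠ 1} ℤπ) ⊕ (⨁_{g² = 1, g ≠ 1} ℤπ/(1+g)) → 0`,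
where `ℤπ ⊗_ℤ ℤπ` carries the diagonal left `π`-action, `Γ(ℤπ)` is the subgroup of symmetric
tensors, and the direct sums range over a set `S` of representatives of the nontrivial elements
of `π` modulo inversion (for the non-chosen representative `g ∉ S` the map sends `1 ⊗ g` to
`-g·e_{g⁻¹}`). -/
theorem gamma_group_ring_short_exact_sequence {π : Type*} [Group π] [DecidableEq π]
    (S : Set π) (h1 : (1 : π) ∉ S) (h2 : ∀ g : π, g ≠ 1 → g ∈ S ∨ g⁻¹ ∈ S)
    (h3 : ∀ g ∈ S, g⁻¹ ∈ S → g⁻¹ = g) :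
    ∃ φ : (MonoidAlgebra ℤ π ⊗[ℤ] MonoidAlgebra ℤ π) →+
        (({x : π // x ∈ S ∧ x * x ≠ 1} →₀ MonoidAlgebra ℤ π) ×
          (⨁ g : {x : π // x ∈ S ∧ x * x = 1},
            MonoidAlgebra ℤ π ⧸ Ideal.span {(1 : MonoidAlgebra ℤ π) + of ℤ π g.1})),
      -- φ is `ℤπ`-linear for the diagonal action on the source:
      (∀ g h : π, φ (of ℤ π g ⊗ₜ[ℤ] of ℤ π h) =
        of ℤ π g • φ ((1 : MonoidAlgebra ℤ π) ⊗ₜ[ℤ] of ℤ π (g⁻¹ * h))) ∧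
      -- values of φ on the `ℤπ`-basis `{1 ⊗ g}` of the source:
      (φ ((1 : MonoidAlgebra ℤ π) ⊗ₜ[ℤ] (1 : MonoidAlgebra ℤ π)) = 0) ∧
      (∀ (g : π) (hg : g ∈ S) (hg2 : g * g ≠ 1),
        φ ((1 : MonoidAlgebra ℤ π) ⊗ₜ[ℤ] of ℤ π g) =
          (Finsupp.single ⟨g, hg, hg2⟩ (1 : MonoidAlgebra ℤ π), 0)) ∧
      (∀ (g : π) (hg : g ∈ S) (hg2 : g * g = 1),
        φ ((1 : MonoidAlgebra ℤ π) ⊗ₜ[ℤ] of ℤ π g) =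
          (0, DirectSum.of (fun g : {x : π // x ∈ S ∧ x * x = 1} =>
              MonoidAlgebra ℤ π ⧸ Ideal.span {(1 : MonoidAlgebra ℤ π) + of ℤ π g.1})
            ⟨g, hg, hg2⟩ (Submodule.Quotient.mk 1))) ∧
      (∀ g : π, g ∉ S → g ≠ 1 → ∃ hmem : g⁻¹ ∈ S ∧ g⁻¹ * g⁻¹ ≠ 1,
        φ ((1 : MonoidAlgebra ℤ π) ⊗ₜ[ℤ] of ℤ π g) =
          (-(of ℤ π g • Finsupp.single ⟨g⁻¹, hmem⟩ (1 : MonoidAlgebra ℤ π)), 0)) ∧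
      -- short exactness: φ is surjective with kernel exactly the symmetric tensors:
      Function.Surjective φ ∧
      (∀ x, φ x = 0 ↔ x ∈ symGA π) := by
  refine ⟨phi S h2, ?_, ?_, ?_, ?_, ?_, phi_surj h2 h1, phi_ker h2 h3⟩
  · intro g h
    rw [phi_of, phi_one_tmul, F]
  · rw [show (1 : MonoidAlgebra ℤ π) ⊗ₜ[ℤ] (1 : MonoidAlgebra ℤ π)
        = (1 : MonoidAlgebra ℤ π) ⊗ₜ[ℤ] of ℤ π 1 from by rw [map_one],
      phi_one_tmul, F0_one]
  · intro g hg hg2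
    rw [phi_one_tmul, F0_S1 h2 hg hg2]
  · intro g hg hg2
    have hne : g ≠ 1 := fun e => h1 (e ▸ hg)
    rw [phi_one_tmul, F0_S2 h2 hg hg2 hne]
  · intro g hgS hg1
    exact ⟨inv_props h2 hg1 hgS, by rw [phi_one_tmul, F0_not h2 hg1 hgS]⟩
end
end

section
/- Let π be a group, let N and N' be ℤπ-modules that are free as ℤ-modules, and let ϖ_M : ℤ ⊗_{ℤπ} Γ(M) → M ⊗_{ℤπ} M denote the map induced by the inclusion Γ(M) ⊆ M ⊗_ℤ M of symmetric tensors (the left factor made a right module via the involution). Then ϖ_{N ⊕ N'} is injective if and only if both ϖ_N and ϖ_{N'} are injective. -/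
noncomputable section

open scoped TensorProduct

variable (π : Type*) [Group π]

/-- The diagonal action of `g ∈ π` on `M ⊗_ℤ M` for a `ℤπ`-module `M`. -/
def diagAct (M : Type*) [AddCommGroup M] [DistribMulAction π M] (g : π) :
    (M ⊗[ℤ] M) →+ (M ⊗[ℤ] M) :=
  (TensorProduct.map (DistribMulAction.toAddMonoidHom M g).toIntLinearMap
    (DistribMulAction.toAddMonoidHom M g).toIntLinearMap).toAddMonoidHom

/-- `Γ(M)`, identified (for `M` free over `ℤ`) with the subgroup of symmetric tensors of
`M ⊗_ℤ M`, generated by the elements `a ⊗ a`. -/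
def symT (M : Type*) [AddCommGroup M] : AddSubgroup (M ⊗[ℤ] M) :=
  AddSubgroup.closure {x | ∃ a : M, x = a ⊗ₜ[ℤ] a}

/-- The coinvariance relations on `M ⊗_ℤ M`; the quotient by them is `M ⊗_{ℤπ} M` with the
left factor viewed as a right module via the involution. -/
def relT (M : Type*) [AddCommGroup M] [DistribMulAction π M] : AddSubgroup (M ⊗[ℤ] M) :=
  AddSubgroup.closure {x | ∃ (g : π) (m : M ⊗[ℤ] M), x = diagAct π M g m - m}

/-- The coinvariance relations on `Γ(M)`; the quotient by them is `ℤ ⊗_{ℤπ} Γ(M)`. -/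
def relS (M : Type*) [AddCommGroup M] [DistribMulAction π M] : AddSubgroup ↥(symT M) :=
  AddSubgroup.closure {x | ∃ (g : π) (m : ↥(symT M)),
    (x : M ⊗[ℤ] M) = diagAct π M g (m : M ⊗[ℤ] M) - m}

/-- `ϖ_M : ℤ ⊗_{ℤπ} Γ(M) → M ⊗_{ℤπ} M`, the map induced by the inclusion of the symmetric
tensors, is injective. -/
def VarpiInjective (M : Type*) [AddCommGroup M] [DistribMulAction π M] : Prop :=
  ∃ f : (↥(symT M) ⧸ relS π M) →+ ((M ⊗[ℤ] M) ⧸ relT π M),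
    (∀ m : ↥(symT M),
      f (QuotientAddGroup.mk m) = QuotientAddGroup.mk (m : M ⊗[ℤ] M)) ∧
    Function.Injective f

/- ### Auxiliary development -/

/-- Diagonal action on a general tensor product of two `π`-modules. -/
def dAct (A B : Type*) [AddCommGroup A] [AddCommGroup B]
    [DistribMulAction π A] [DistribMulAction π B] (g : π) :
    (A ⊗[ℤ] B) →+ (A ⊗[ℤ] B) :=
  (TensorProduct.map (DistribMulAction.toAddMonoidHom A g).toIntLinearMap
    (DistribMulAction.toAddMonoidHom B g).toIntLinearMap).toAddMonoidHom

/-- General coinvariance relations on `A ⊗_ℤ B`. -/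
def relX (A B : Type*) [AddCommGroup A] [AddCommGroup B]
    [DistribMulAction π A] [DistribMulAction π B] : AddSubgroup (A ⊗[ℤ] B) :=
  AddSubgroup.closure {x | ∃ (g : π) (m : A ⊗[ℤ] B), x = dAct π A B g m - m}

section Aux

variable {π}

lemma dAct_tmul (A B : Type*) [AddCommGroup A] [AddCommGroup B]
    [DistribMulAction π A] [DistribMulAction π B] (g : π) (a : A) (b : B) :
    dAct π A B g (a ⊗ₜ[ℤ] b) = (g • a) ⊗ₜ[ℤ] (g • b) := rfl

lemma diagAct_eq_dAct (M : Type*) [AddCommGroup M] [DistribMulAction π M] :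
    diagAct π M = dAct π M M := rfl

lemma relT_eq_relX (M : Type*) [AddCommGroup M] [DistribMulAction π M] :
    relT π M = relX π M M := rfl

lemma mem_closure_map {A B : Type*} [AddCommGroup A] [AddCommGroup B] (φ : A →+ B)
    {S : Set A} {T : AddSubgroup B} (h : ∀ x ∈ S, φ x ∈ T) {x : A}
    (hx : x ∈ AddSubgroup.closure S) : φ x ∈ T :=
  ((AddSubgroup.closure_le (T.comap φ)).mpr h) hx

lemma map_dAct {A B A' B' : Type*} [AddCommGroup A] [AddCommGroup B]
    [AddCommGroup A'] [AddCommGroup B'] [DistribMulAction π A] [DistribMulAction π B]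
    [DistribMulAction π A'] [DistribMulAction π B']
    (f : A →ₗ[ℤ] A') (f' : B →ₗ[ℤ] B')
    (hf : ∀ (g : π) (a : A), f (g • a) = g • f a)
    (hf' : ∀ (g : π) (b : B), f' (g • b) = g • f' b) (g : π) (x : A ⊗[ℤ] B) :
    TensorProduct.map f f' (dAct π A B g x) = dAct π A' B' g (TensorProduct.map f f' x) := by
  induction x using TensorProduct.induction_on with
  | zero => simp
  | tmul a b => simp [dAct_tmul, hf, hf']
  | add x y hx hy => simp [map_add, hx, hy]

lemma map_mem_relX {A B A' B' : Type*} [AddCommGroup A] [AddCommGroup B]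
    [AddCommGroup A'] [AddCommGroup B'] [DistribMulAction π A] [DistribMulAction π B]
    [DistribMulAction π A'] [DistribMulAction π B']
    (f : A →ₗ[ℤ] A') (f' : B →ₗ[ℤ] B')
    (hf : ∀ (g : π) (a : A), f (g • a) = g • f a)
    (hf' : ∀ (g : π) (b : B), f' (g • b) = g • f' b) {x : A ⊗[ℤ] B}
    (hx : x ∈ relX π A B) : TensorProduct.map f f' x ∈ relX π A' B' := by
  refine mem_closure_map (TensorProduct.map f f').toAddMonoidHom ?_ hx
  rintro _ ⟨g, m, rfl⟩
  refine AddSubgroup.subset_closure ⟨g, TensorProduct.map f f' m, ?_⟩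
  simp only [LinearMap.toAddMonoidHom_coe, map_sub, map_dAct f f' hf hf']

lemma map_mem_symT {A A' : Type*} [AddCommGroup A] [AddCommGroup A']
    (f : A →ₗ[ℤ] A') {x : A ⊗[ℤ] A} (hx : x ∈ symT A) :
    TensorProduct.map f f x ∈ symT A' := by
  refine mem_closure_map (TensorProduct.map f f).toAddMonoidHom ?_ hx
  rintro _ ⟨a, rfl⟩
  exact AddSubgroup.subset_closure ⟨f a, by simp⟩

/-- `VarpiInjective` is equivalent to an elementwise criterion. -/
lemma varpi_iff (M : Type*) [AddCommGroup M] [DistribMulAction π M] :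
    VarpiInjective π M ↔
      ∀ s : ↥(symT M), (s : M ⊗[ℤ] M) ∈ relT π M → s ∈ relS π M := by
  constructor
  · rintro ⟨f, hf, hinj⟩ s hs
    have h0 : f (QuotientAddGroup.mk s) = f 0 := by
      rw [hf, map_zero]
      exact (QuotientAddGroup.eq_zero_iff _).mpr hs
    have := hinj h0
    exact (QuotientAddGroup.eq_zero_iff _).mp this
  · intro h
    have hle : relS π M ≤
        ((QuotientAddGroup.mk' (relT π M)).comp (symT M).subtype).ker := by
      rw [relS]
      refine (AddSubgroup.closure_le _).mpr ?_
      rintro x ⟨g, m, hx⟩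
      simp only [SetLike.mem_coe, AddMonoidHom.mem_ker, AddMonoidHom.comp_apply,
        QuotientAddGroup.mk'_apply, AddSubgroup.coe_subtype]
      rw [QuotientAddGroup.eq_zero_iff, hx]
      exact AddSubgroup.subset_closure ⟨g, (m : M ⊗[ℤ] M), rfl⟩
    refine ⟨QuotientAddGroup.lift _ _ hle, fun m => rfl, ?_⟩
    rw [injective_iff_map_eq_zero]
    intro a
    induction a using QuotientAddGroup.induction_on with
    | H s =>
      intro ha
      have hmem : (s : M ⊗[ℤ] M) ∈ relT π M := by
        have : QuotientAddGroup.mk (s : M ⊗[ℤ] M) = (0 : (M ⊗[ℤ] M) ⧸ relT π M) := ha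
        exact (QuotientAddGroup.eq_zero_iff _).mp this
      exact (QuotientAddGroup.eq_zero_iff _).mpr (h s hmem)

variable {N N' : Type*} [AddCommGroup N] [AddCommGroup N']
  [DistribMulAction π N] [DistribMulAction π N']

lemma inl_smul (g : π) (a : N) :
    (LinearMap.inl ℤ N N') (g • a) = g • (LinearMap.inl ℤ N N') a := by
  simp [Prod.ext_iff, smul_zero]

lemma inr_smul (g : π) (b : N') :
    (LinearMap.inr ℤ N N') (g • b) = g • (LinearMap.inr ℤ N N') b := by
  simp [Prod.ext_iff, smul_zero]

lemma fst_smul (g : π) (p : N × N') :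
    (LinearMap.fst ℤ N N') (g • p) = g • (LinearMap.fst ℤ N N') p := rfl

lemma snd_smul (g : π) (p : N × N') :
    (LinearMap.snd ℤ N N') (g • p) = g • (LinearMap.snd ℤ N N') p := rfl

set_option maxHeartbeats 1000000 in
/-- The four-component decomposition of `(N × N') ⊗ (N × N')`. -/
lemma four_decomp (x : (N × N') ⊗[ℤ] (N × N')) :
    TensorProduct.map (LinearMap.inl ℤ N N') (LinearMap.inl ℤ N N')
        (TensorProduct.map (LinearMap.fst ℤ N N') (LinearMap.fst ℤ N N') x) +
      TensorProduct.map (LinearMap.inl ℤ N N') (LinearMap.inr ℤ N N')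
        (TensorProduct.map (LinearMap.fst ℤ N N') (LinearMap.snd ℤ N N') x) +
      TensorProduct.map (LinearMap.inr ℤ N N') (LinearMap.inl ℤ N N')
        (TensorProduct.map (LinearMap.snd ℤ N N') (LinearMap.fst ℤ N N') x) +
      TensorProduct.map (LinearMap.inr ℤ N N') (LinearMap.inr ℤ N N')
        (TensorProduct.map (LinearMap.snd ℤ N N') (LinearMap.snd ℤ N N') x) = x := by
  have key : (TensorProduct.map (LinearMap.inl ℤ N N') (LinearMap.inl ℤ N N') ∘ₗ
        TensorProduct.map (LinearMap.fst ℤ N N') (LinearMap.fst ℤ N N')) +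
      (TensorProduct.map (LinearMap.inl ℤ N N') (LinearMap.inr ℤ N N') ∘ₗ
        TensorProduct.map (LinearMap.fst ℤ N N') (LinearMap.snd ℤ N N')) +
      (TensorProduct.map (LinearMap.inr ℤ N N') (LinearMap.inl ℤ N N') ∘ₗ
        TensorProduct.map (LinearMap.snd ℤ N N') (LinearMap.fst ℤ N N')) +
      (TensorProduct.map (LinearMap.inr ℤ N N') (LinearMap.inr ℤ N N') ∘ₗ
        TensorProduct.map (LinearMap.snd ℤ N N') (LinearMap.snd ℤ N N')) =
      (LinearMap.id : (N × N') ⊗[ℤ] (N × N') →ₗ[ℤ] (N × N') ⊗[ℤ] (N × N')) := by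
    apply TensorProduct.ext'
    intro p q
    simp only [LinearMap.add_apply, LinearMap.comp_apply, LinearMap.id_apply,
      TensorProduct.map_tmul, LinearMap.fst_apply, LinearMap.snd_apply,
      LinearMap.inl_apply, LinearMap.inr_apply]
    have hp : ((p.1, 0) : N × N') + (0, p.2) = p := by
      simp [Prod.ext_iff]
    have hq : ((q.1, 0) : N × N') + (0, q.2) = q := by
      simp [Prod.ext_iff]
    conv_rhs => rw [← hp, ← hq]
    rw [TensorProduct.add_tmul, TensorProduct.tmul_add, TensorProduct.tmul_add]
    abel
  have := LinearMap.congr_fun key x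
  exact this.trans (LinearMap.id_apply x)

/-- On symmetric tensors, the `N' ⊗ N` component is the flip of the `N ⊗ N'` component. -/
lemma symm_component {y : (N × N') ⊗[ℤ] (N × N')} (hy : y ∈ symT (N × N')) :
    TensorProduct.map (LinearMap.snd ℤ N N') (LinearMap.fst ℤ N N') y =
      TensorProduct.comm ℤ N N'
        (TensorProduct.map (LinearMap.fst ℤ N N') (LinearMap.snd ℤ N N') y) := by
  set F : (N × N') ⊗[ℤ] (N × N') →+ N' ⊗[ℤ] N :=
    (TensorProduct.map (LinearMap.snd ℤ N N') (LinearMap.fst ℤ N N')).toAddMonoidHom -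
      ((TensorProduct.comm ℤ N N').toLinearMap ∘ₗ
        TensorProduct.map (LinearMap.fst ℤ N N') (LinearMap.snd ℤ N N')).toAddMonoidHom
    with hF
  have h0 : F y ∈ (⊥ : AddSubgroup (N' ⊗[ℤ] N)) := by
    refine mem_closure_map F ?_ hy
    rintro _ ⟨a, rfl⟩
    simp [hF, TensorProduct.comm_tmul]
  have : F y = 0 := by simpa using h0
  have h := sub_eq_zero.mp (by simpa [hF, AddMonoidHom.sub_apply] using this)
  simpa using h

/-- Push the criterion through a restriction of a tensor-square map between `symT`s. -/
lemma crit_left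
    (hM : ∀ s : ↥(symT (N × N')), (s : (N × N') ⊗[ℤ] (N × N')) ∈ relT π (N × N') → s ∈ relS π (N × N')) :
    ∀ s : ↥(symT N), (s : N ⊗[ℤ] N) ∈ relT π N → s ∈ relS π N := by
  intro s hs
  have h1 : TensorProduct.map (LinearMap.inl ℤ N N') (LinearMap.inl ℤ N N') (s : N ⊗[ℤ] N)
      ∈ symT (N × N') := map_mem_symT _ s.2
  have h2 : TensorProduct.map (LinearMap.inl ℤ N N') (LinearMap.inl ℤ N N') (s : N ⊗[ℤ] N)
      ∈ relT π (N × N') := by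
    rw [relT_eq_relX] at hs ⊢
    exact map_mem_relX _ _ inl_smul inl_smul hs
  have h3 := hM ⟨_, h1⟩ h2
  -- push forward through qNN
  let ψ : ↥(symT (N × N')) →+ ↥(symT N) :=
    AddMonoidHom.mk'
      (fun x => ⟨TensorProduct.map (LinearMap.fst ℤ N N') (LinearMap.fst ℤ N N') (x : _),
        map_mem_symT _ x.2⟩)
      (by intro a b; ext; simp)
  have hψrel : ∀ x ∈ relS π (N × N'), ψ x ∈ relS π N := by
    intro x hx
    refine mem_closure_map ψ ?_ hx
    rintro z ⟨g, m, hz⟩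
    refine AddSubgroup.subset_closure ⟨g, ψ m, ?_⟩
    show TensorProduct.map (LinearMap.fst ℤ N N') (LinearMap.fst ℤ N N') (z : _) = _
    rw [hz, map_sub, diagAct_eq_dAct, diagAct_eq_dAct,
      map_dAct _ _ fst_smul fst_smul]
    rfl
  have h4 := hψrel _ h3
  have h5 : ψ ⟨_, h1⟩ = s := by
    ext
    show TensorProduct.map (LinearMap.fst ℤ N N') (LinearMap.fst ℤ N N')
      (TensorProduct.map (LinearMap.inl ℤ N N') (LinearMap.inl ℤ N N') (s : N ⊗[ℤ] N))
      = (s : N ⊗[ℤ] N)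
    induction (s : N ⊗[ℤ] N) using TensorProduct.induction_on with
    | zero => simp
    | tmul a b => simp
    | add x y hx hy => simp [map_add, hx, hy]
  rwa [h5] at h4

lemma crit_right
    (hM : ∀ s : ↥(symT (N × N')), (s : (N × N') ⊗[ℤ] (N × N')) ∈ relT π (N × N') → s ∈ relS π (N × N')) :
    ∀ s : ↥(symT N'), (s : N' ⊗[ℤ] N') ∈ relT π N' → s ∈ relS π N' := by
  intro s hs
  have h1 : TensorProduct.map (LinearMap.inr ℤ N N') (LinearMap.inr ℤ N N') (s : N' ⊗[ℤ] N')
      ∈ symT (N × N') := map_mem_symT _ s.2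
  have h2 : TensorProduct.map (LinearMap.inr ℤ N N') (LinearMap.inr ℤ N N') (s : N' ⊗[ℤ] N')
      ∈ relT π (N × N') := by
    rw [relT_eq_relX] at hs ⊢
    exact map_mem_relX _ _ inr_smul inr_smul hs
  have h3 := hM ⟨_, h1⟩ h2
  let ψ : ↥(symT (N × N')) →+ ↥(symT N') :=
    AddMonoidHom.mk'
      (fun x => ⟨TensorProduct.map (LinearMap.snd ℤ N N') (LinearMap.snd ℤ N N') (x : _),
        map_mem_symT _ x.2⟩)
      (by intro a b; ext; simp)
  have hψrel : ∀ x ∈ relS π (N × N'), ψ x ∈ relS π N' := by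
    intro x hx
    refine mem_closure_map ψ ?_ hx
    rintro z ⟨g, m, hz⟩
    refine AddSubgroup.subset_closure ⟨g, ψ m, ?_⟩
    show TensorProduct.map (LinearMap.snd ℤ N N') (LinearMap.snd ℤ N N') (z : _) = _
    rw [hz, map_sub, diagAct_eq_dAct, diagAct_eq_dAct,
      map_dAct _ _ snd_smul snd_smul]
    rfl
  have h4 := hψrel _ h3
  have h5 : ψ ⟨_, h1⟩ = s := by
    ext
    show TensorProduct.map (LinearMap.snd ℤ N N') (LinearMap.snd ℤ N N')
      (TensorProduct.map (LinearMap.inr ℤ N N') (LinearMap.inr ℤ N N') (s : N' ⊗[ℤ] N'))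
      = (s : N' ⊗[ℤ] N')
    induction (s : N' ⊗[ℤ] N') using TensorProduct.induction_on with
    | zero => simp
    | tmul a b => simp
    | add x y hx hy => simp [map_add, hx, hy]
  rwa [h5] at h4

/-- The `(1 + T)` diagonal map `N ⊗ N' → (N × N') ⊗ (N × N')`, landing in `symT`. -/
def phiMid : N ⊗[ℤ] N' → (N × N') ⊗[ℤ] (N × N') := fun x =>
  TensorProduct.map (LinearMap.inl ℤ N N') (LinearMap.inr ℤ N N') x +
    TensorProduct.map (LinearMap.inr ℤ N N') (LinearMap.inl ℤ N N')
      (TensorProduct.comm ℤ N N' x)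

lemma phiMid_add (x y : N ⊗[ℤ] N') : phiMid (x + y) = phiMid x + phiMid y := by
  simp only [phiMid, map_add]
  abel

lemma phiMid_sub (x y : N ⊗[ℤ] N') : phiMid (x - y) = phiMid x - phiMid y := by
  simp only [phiMid, map_sub]
  abel

lemma phiMid_tmul (a : N) (b : N') :
    phiMid (a ⊗ₜ[ℤ] b) =
      ((a, 0) : N × N') ⊗ₜ[ℤ] ((0, b) : N × N') +
        ((0, b) : N × N') ⊗ₜ[ℤ] ((a, 0) : N × N') := by
  simp [phiMid, TensorProduct.comm_tmul]

lemma phiMid_mem_symT (x : N ⊗[ℤ] N') : phiMid x ∈ symT (N × N') := by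
  induction x using TensorProduct.induction_on with
  | zero => simp only [phiMid, map_zero, add_zero]; exact zero_mem _
  | tmul a b =>
    rw [phiMid_tmul]
    have key : ((a, 0) : N × N') ⊗ₜ[ℤ] ((0, b) : N × N') +
        ((0, b) : N × N') ⊗ₜ[ℤ] ((a, 0) : N × N') =
        ((a, b) : N × N') ⊗ₜ[ℤ] ((a, b) : N × N') -
        ((a, 0) : N × N') ⊗ₜ[ℤ] ((a, 0) : N × N') -
        ((0, b) : N × N') ⊗ₜ[ℤ] ((0, b) : N × N') := by
      have h1 : ((a, b) : N × N') = (a, 0) + (0, b) := by simp [Prod.ext_iff]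
      rw [h1, TensorProduct.add_tmul, TensorProduct.tmul_add, TensorProduct.tmul_add]
      abel
    rw [key]
    exact sub_mem (sub_mem (AddSubgroup.subset_closure ⟨_, rfl⟩)
      (AddSubgroup.subset_closure ⟨_, rfl⟩)) (AddSubgroup.subset_closure ⟨_, rfl⟩)
  | add x y hx hy =>
    rw [phiMid_add]
    exact add_mem hx hy

lemma phiMid_dAct (g : π) (x : N ⊗[ℤ] N') :
    phiMid (dAct π N N' g x) = diagAct π (N × N') g (phiMid x) := by
  induction x using TensorProduct.induction_on with
  | zero => simp [phiMid]
  | tmul a b =>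
    rw [dAct_tmul, phiMid_tmul, phiMid_tmul]
    have hsm1 : (g • ((a, 0) : N × N')) = ((g • a, 0) : N × N') := by
      simp [Prod.ext_iff, smul_zero]
    have hsm2 : (g • ((0, b) : N × N')) = ((0, g • b) : N × N') := by
      simp [Prod.ext_iff, smul_zero]
    show _ = dAct π (N × N') (N × N') g _
    rw [map_add, dAct_tmul, dAct_tmul, hsm1, hsm2]
  | add x y hx hy =>
    rw [map_add, phiMid_add, hx, hy, phiMid_add, map_add]

/-- The hard direction: the criterion for the product. -/
lemma crit_prod
    (hN : ∀ s : ↥(symT N), (s : N ⊗[ℤ] N) ∈ relT π N → s ∈ relS π N)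
    (hN' : ∀ s : ↥(symT N'), (s : N' ⊗[ℤ] N') ∈ relT π N' → s ∈ relS π N') :
    ∀ s : ↥(symT (N × N')), (s : (N × N') ⊗[ℤ] (N × N')) ∈ relT π (N × N') → s ∈ relS π (N × N') := by
  intro s hs
  rw [relT_eq_relX] at hs
  -- the four components
  set a1 := TensorProduct.map (LinearMap.fst ℤ N N') (LinearMap.fst ℤ N N')
    ((s : (N × N') ⊗[ℤ] (N × N'))) with ha1
  set x1 := TensorProduct.map (LinearMap.fst ℤ N N') (LinearMap.snd ℤ N N')
    ((s : (N × N') ⊗[ℤ] (N × N'))) with hx1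
  set d1 := TensorProduct.map (LinearMap.snd ℤ N N') (LinearMap.snd ℤ N N')
    ((s : (N × N') ⊗[ℤ] (N × N'))) with hd1
  have ha_sym : a1 ∈ symT N := map_mem_symT _ s.2
  have hd_sym : d1 ∈ symT N' := map_mem_symT _ s.2
  have ha_rel : a1 ∈ relT π N := by
    rw [relT_eq_relX]; exact map_mem_relX _ _ fst_smul fst_smul hs
  have hd_rel : d1 ∈ relT π N' := by
    rw [relT_eq_relX]; exact map_mem_relX _ _ snd_smul snd_smul hs
  have hx_rel : x1 ∈ relX π N N' := map_mem_relX _ _ fst_smul snd_smul hs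
  -- the N'⊗N component is the flip of x1
  have hc : TensorProduct.map (LinearMap.snd ℤ N N') (LinearMap.fst ℤ N N')
      ((s : (N × N') ⊗[ℤ] (N × N'))) = TensorProduct.comm ℤ N N' x1 :=
    symm_component s.2
  -- piece 1 : jNN a1 ∈ relS (N × N')
  have haS : (⟨a1, ha_sym⟩ : ↥(symT N)) ∈ relS π N := hN ⟨a1, ha_sym⟩ ha_rel
  let J : ↥(symT N) →+ ↥(symT (N × N')) :=
    AddMonoidHom.mk'
      (fun x => ⟨TensorProduct.map (LinearMap.inl ℤ N N') (LinearMap.inl ℤ N N') (x : _),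
        map_mem_symT _ x.2⟩)
      (by intro a b; ext; simp)
  have hJ : J ⟨a1, ha_sym⟩ ∈ relS π (N × N') := by
    refine mem_closure_map J ?_ haS
    rintro z ⟨g, m, hz⟩
    refine AddSubgroup.subset_closure ⟨g, J m, ?_⟩
    show TensorProduct.map (LinearMap.inl ℤ N N') (LinearMap.inl ℤ N N') (z : _) = _
    rw [hz, map_sub, diagAct_eq_dAct, diagAct_eq_dAct,
      map_dAct _ _ inl_smul inl_smul]
    rfl
  have hdS : (⟨d1, hd_sym⟩ : ↥(symT N')) ∈ relS π N' := hN' ⟨d1, hd_sym⟩ hd_rel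
  let J' : ↥(symT N') →+ ↥(symT (N × N')) :=
    AddMonoidHom.mk'
      (fun x => ⟨TensorProduct.map (LinearMap.inr ℤ N N') (LinearMap.inr ℤ N N') (x : _),
        map_mem_symT _ x.2⟩)
      (by intro a b; ext; simp)
  have hJ' : J' ⟨d1, hd_sym⟩ ∈ relS π (N × N') := by
    refine mem_closure_map J' ?_ hdS
    rintro z ⟨g, m, hz⟩
    refine AddSubgroup.subset_closure ⟨g, J' m, ?_⟩
    show TensorProduct.map (LinearMap.inr ℤ N N') (LinearMap.inr ℤ N N') (z : _) = _
    rw [hz, map_sub, diagAct_eq_dAct, diagAct_eq_dAct,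
      map_dAct _ _ inr_smul inr_smul]
    rfl
  -- middle piece
  let Φ : N ⊗[ℤ] N' →+ ↥(symT (N × N')) :=
    AddMonoidHom.mk' (fun x => ⟨phiMid x, phiMid_mem_symT x⟩)
      (by intro a b; ext; exact phiMid_add a b)
  have hΦ : Φ x1 ∈ relS π (N × N') := by
    refine mem_closure_map Φ ?_ hx_rel
    rintro z ⟨g, m, rfl⟩
    refine AddSubgroup.subset_closure ⟨g, Φ m, ?_⟩
    show phiMid (dAct π N N' g m - m) = _
    rw [phiMid_sub, phiMid_dAct]
    rfl
  -- reassemble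
  have hsum : J ⟨a1, ha_sym⟩ + Φ x1 + J' ⟨d1, hd_sym⟩ = s := by
    ext
    show TensorProduct.map (LinearMap.inl ℤ N N') (LinearMap.inl ℤ N N') a1 + phiMid x1 +
      TensorProduct.map (LinearMap.inr ℤ N N') (LinearMap.inr ℤ N N') d1 =
      (s : (N × N') ⊗[ℤ] (N × N'))
    have h4 := four_decomp ((s : (N × N') ⊗[ℤ] (N × N')))
    rw [hc] at h4
    rw [← h4]
    simp only [phiMid, ← ha1, ← hx1, ← hd1]
    abel
  rw [← hsum]
  exact add_mem (add_mem hJ hΦ) hJ'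

end Aux

/-- for `ℤπ`-modules `N`, `N'` that are free as `ℤ`-modules, `ϖ_{N ⊕ N'}` is
injective if and only if both `ϖ_N` and `ϖ_{N'}` are injective. -/
theorem varpi_prod_injective_iff {π : Type*} [Group π] {N N' : Type*}
    [AddCommGroup N] [AddCommGroup N'] [DistribMulAction π N] [DistribMulAction π N']
    [Module.Free ℤ N] [Module.Free ℤ N'] :
    VarpiInjective π (N × N') ↔ VarpiInjective π N ∧ VarpiInjective π N' := by
  rw [varpi_iff (N × N'), varpi_iff N, varpi_iff N']
  exact ⟨fun h => ⟨crit_left h, crit_right h⟩, fun h => crit_prod h.1 h.2⟩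
end
end

section
/- Let π be a group and V a ℤ/2-vector space. Let T act on V ⊗_{ℤ/2} V by transposition. Then the map Ĥ⁰(ℤ/2; V ⊗_{ℤ/2} V) → V sending the class of [v ⊗ v] to v is a well-defined isomorphism; equivalently, every element of ker(1−T)/im(1+T) is represented by a sum of elementary symmetric tensors v ⊗ v, and the assignment is additive. -/
noncomputable section

open scoped TensorProduct

/-- The Tate cohomology group `Ĥ⁰(ℤ/2; A) = ker(1 - T)/im(1 + T)` of the `ℤ/2`-action on an
abelian group `A` given by an (involutive) endomorphism `T`. -/
abbrev tateZero {A : Type*} [AddCommGroup A] (T : A →+ A) : Type _ :=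
  ↥(AddMonoidHom.ker (AddMonoidHom.id A - T)) ⧸
    ((AddMonoidHom.id A + T).range.addSubgroupOf (AddMonoidHom.ker (AddMonoidHom.id A - T)))

section Aux

variable {V : Type*} [AddCommGroup V] [Module (ZMod 2) V]
variable {ι : Type*} (b : Module.Basis ι (ZMod 2) V)

private def Tlin : V ⊗[ZMod 2] V →ₗ[ZMod 2] V ⊗[ZMod 2] V :=
  (TensorProduct.comm (ZMod 2) V V).toLinearMap

private def Sw : (ι × ι →₀ ZMod 2) ≃ₗ[ZMod 2] (ι × ι →₀ ZMod 2) :=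
  Finsupp.domLCongr (Equiv.prodComm ι ι)

private lemma Sw_apply (r : ι × ι →₀ ZMod 2) (i j : ι) : Sw r (i, j) = r (j, i) := by
  simp [Sw, Finsupp.domLCongr_apply, Finsupp.equivMapDomain_apply]

private lemma repr_comm (x : V ⊗[ZMod 2] V) :
    (b.tensorProduct b).repr (Tlin x) = Sw ((b.tensorProduct b).repr x) := by
  classical
  have h : ((b.tensorProduct b).repr.toLinearMap.comp Tlin)
      = ((Sw (ι := ι)).toLinearMap.comp (b.tensorProduct b).repr.toLinearMap) := by
    apply Module.Basis.ext (b.tensorProduct b)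
    rintro ⟨i, j⟩
    have h1 : (b.tensorProduct b) (i, j) = b i ⊗ₜ[ZMod 2] b j := Module.Basis.tensorProduct_apply b b i j
    have h2 : (b.tensorProduct b) (j, i) = b j ⊗ₜ[ZMod 2] b i := Module.Basis.tensorProduct_apply b b j i
    simp only [LinearMap.coe_comp, Function.comp_apply, LinearEquiv.coe_coe, h1, Tlin,
      TensorProduct.comm_tmul, ← h2, Module.Basis.repr_self]
    ext ⟨p, q⟩
    rw [Sw_apply]
    rw [Module.Basis.tensorProduct_repr_tmul_apply]
    simp only [Module.Basis.repr_self, Finsupp.single_apply, Prod.mk.injEq, smul_eq_mul, ite_and]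
    split_ifs <;> simp_all
  exact LinearMap.congr_fun h x

private def diagF : (ι × ι →₀ ZMod 2) →ₗ[ZMod 2] (ι →₀ ZMod 2) :=
  Finsupp.lcomapDomain (fun i => (i, i)) (fun i j h => (Prod.ext_iff.mp h).1)

private lemma diagF_apply (r : ι × ι →₀ ZMod 2) (i : ι) : diagF r i = r (i, i) := rfl

/-- The "diagonal" map `V ⊗ V → V`. -/
private def dmap : V ⊗[ZMod 2] V →ₗ[ZMod 2] V :=
  (b.repr.symm : (ι →₀ ZMod 2) →ₗ[ZMod 2] V).comp
    (diagF.comp ((b.tensorProduct b).repr : V ⊗[ZMod 2] V →ₗ[ZMod 2] (ι × ι →₀ ZMod 2)))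

private lemma zmod2_mul_self (a : ZMod 2) : a * a = a := by revert a; decide

private lemma dmap_tmul (v : V) : dmap b (v ⊗ₜ[ZMod 2] v) = v := by
  have h : diagF ((b.tensorProduct b).repr (v ⊗ₜ[ZMod 2] v)) = b.repr v := by
    ext i
    rw [diagF_apply, Module.Basis.tensorProduct_repr_tmul_apply, smul_eq_mul, zmod2_mul_self]
  simp only [dmap, LinearMap.coe_comp, Function.comp_apply, LinearEquiv.coe_coe, h,
    Module.Basis.repr_symm_apply, Module.Basis.linearCombination_repr]

private lemma dmap_comm (x : V ⊗[ZMod 2] V) : dmap b (Tlin x) = dmap b x := by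
  have h : diagF (Sw ((b.tensorProduct b).repr x)) = diagF ((b.tensorProduct b).repr x) := by
    ext i
    rw [diagF_apply, diagF_apply, Sw_apply]
  simp only [dmap, LinearMap.coe_comp, Function.comp_apply, LinearEquiv.coe_coe, repr_comm, h]

private lemma dmap_key (x : V ⊗[ZMod 2] V) (hx : Tlin x = x) (hd : dmap b x = 0) :
    ∃ y : V ⊗[ZMod 2] V, y + Tlin y = x := by
  classical
  letI : LinearOrder ι := IsWellOrder.linearOrder WellOrderingRel
  set r := (b.tensorProduct b).repr x with hr
  have hsym : ∀ i j : ι, r (j, i) = r (i, j) := by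
    intro i j
    have := repr_comm b x
    rw [hx] at this
    have h2 := congrFun (congrArg DFunLike.coe this) (i, j)
    rw [Sw_apply] at h2
    exact h2.symm
  have hdiag : ∀ i : ι, r (i, i) = 0 := by
    intro i
    have h0 : diagF r = 0 := by
      have : (b.repr.symm : (ι →₀ ZMod 2) →ₗ[ZMod 2] V) (diagF r) = 0 := hd
      have := congrArg b.repr this
      simpa using this
    have := congrFun (congrArg DFunLike.coe h0) i
    simpa [diagF_apply] using this
  set s : ι × ι →₀ ZMod 2 := r.filter (fun p => p.1 < p.2) with hs
  refine ⟨(b.tensorProduct b).repr.symm s, ?_⟩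
  apply (b.tensorProduct b).repr.injective
  rw [map_add, repr_comm, LinearEquiv.apply_symm_apply]
  ext ⟨i, j⟩
  rw [Finsupp.add_apply, Sw_apply]
  have hsa : ∀ p : ι × ι, s p = if p.1 < p.2 then r p else 0 := fun p => Finsupp.filter_apply _ _ _
  rw [hsa, hsa]
  simp only
  rcases lt_trichotomy i j with h | h | h
  · rw [if_pos h, if_neg (not_lt_of_gt h), add_zero]
  · subst h
    rw [if_neg (lt_irrefl i), add_zero, hdiag]
  · rw [if_neg (not_lt_of_gt h), if_pos h, zero_add, hsym]

end Aux

/-- for a `ℤ/2`-vector space `V` with `T` acting on `V ⊗ V` by transposition,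
the map `Ĥ⁰(ℤ/2; V ⊗ V) → V` sending the class of `v ⊗ v` to `v` is a well-defined
isomorphism (in particular every class is represented by a sum of tensors `v ⊗ v` and the
assignment is additive). -/
theorem tate_zero_of_tensor_square_of_vector_space
    {V : Type*} [AddCommGroup V] [Module (ZMod 2) V] :
    ∃ e : tateZero ((TensorProduct.comm (ZMod 2) V V).toLinearMap.toAddMonoidHom) ≃+ V,
      ∀ v : V, ∃ hv : (v ⊗ₜ[ZMod 2] v) ∈
          AddMonoidHom.ker (AddMonoidHom.id (V ⊗[ZMod 2] V) -
            (TensorProduct.comm (ZMod 2) V V).toLinearMap.toAddMonoidHom),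
        e (QuotientAddGroup.mk ⟨v ⊗ₜ[ZMod 2] v, hv⟩) = v := by
  classical
  set T : V ⊗[ZMod 2] V →+ V ⊗[ZMod 2] V :=
    (TensorProduct.comm (ZMod 2) V V).toLinearMap.toAddMonoidHom with hT
  have hTlin : ∀ x, T x = Tlin (V := V) x := fun x => rfl
  set b : Module.Basis (Module.Basis.ofVectorSpaceIndex (ZMod 2) V) (ZMod 2) V :=
    Module.Basis.ofVectorSpace (ZMod 2) V with hb
  set K := AddMonoidHom.ker (AddMonoidHom.id (V ⊗[ZMod 2] V) - T) with hK
  have mem_K_iff : ∀ x : V ⊗[ZMod 2] V, x ∈ K ↔ T x = x := by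
    intro x
    rw [hK, AddMonoidHom.mem_ker, AddMonoidHom.sub_apply, AddMonoidHom.id_apply, sub_eq_zero]
    exact eq_comm
  -- the additive hom from the Tate group to V
  set dh : K →+ V := ((dmap b).toAddMonoidHom).comp K.subtype with hdh
  have hcond : (AddMonoidHom.id (V ⊗[ZMod 2] V) + T).range.addSubgroupOf K ≤
      AddMonoidHom.ker dh := by
    rintro ⟨x, hxK⟩ hx
    rw [AddSubgroup.mem_addSubgroupOf] at hx
    obtain ⟨y, hy⟩ := hx
    rw [AddMonoidHom.mem_ker]
    have hxy : y + Tlin y = x := hy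
    have : dh ⟨x, hxK⟩ = dmap b x := rfl
    rw [this, ← hxy, map_add, dmap_comm]
    have : dmap b y + dmap b y = (2 : ZMod 2) • dmap b y := (two_smul (ZMod 2) _).symm
    rw [this, show (2 : ZMod 2) = 0 from rfl, zero_smul]
  set e0 : tateZero T →+ V := QuotientAddGroup.lift _ dh hcond with he0
  have hv' : ∀ v : V, (v ⊗ₜ[ZMod 2] v) ∈ K := by
    intro v
    rw [mem_K_iff, hTlin]
    exact TensorProduct.comm_tmul (ZMod 2) V V v v
  have he0v : ∀ v : V, e0 (QuotientAddGroup.mk ⟨v ⊗ₜ[ZMod 2] v, hv' v⟩) = v := by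
    intro v
    have : e0 (QuotientAddGroup.mk ⟨v ⊗ₜ[ZMod 2] v, hv' v⟩) = dmap b (v ⊗ₜ[ZMod 2] v) := rfl
    rw [this, dmap_tmul]
  have hsurj : Function.Surjective e0 := fun v => ⟨_, he0v v⟩
  have hinj : Function.Injective e0 := by
    rw [injective_iff_map_eq_zero]
    intro q hq
    induction q using QuotientAddGroup.induction_on with
    | H z =>
      obtain ⟨x, hxK⟩ := z
      have hdx : dmap b x = 0 := hq
      have hTx : Tlin x = x := by rw [← hTlin]; exact (mem_K_iff x).mp hxK
      obtain ⟨y, hy⟩ := dmap_key b x hTx hdx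
      rw [QuotientAddGroup.eq_zero_iff, AddSubgroup.mem_addSubgroupOf]
      exact ⟨y, hy⟩
  refine ⟨AddEquiv.ofBijective e0 ⟨hinj, hsurj⟩, fun v => ⟨hv' v, he0v v⟩⟩
end
end

section
/- Let π be a finite group and M a finitely generated left ℤπ-module, with M* = Hom_{ℤπ}(M, ℤπ). Then the map F_M : M* ⊗_ℤ M* → Hom_{ℤπ}(M, Hom_{ℤπ}(M, ℤπ ⊗_ℤ ℤπ)) defined by F_M(f ⊗ h)(m)(n) = f(n) ⊗ conjugate(h(m)) is injective. -/
noncomputable section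

open scoped TensorProduct

/-- The involution on the group ring `ℤπ`, i.e. the `ℤ`-linear extension of `g ↦ g⁻¹`. -/
def rconj {π : Type*} [Group π] : MonoidAlgebra ℤ π →+ MonoidAlgebra ℤ π :=
  MonoidAlgebra.coeffAddEquiv.symm.toAddMonoidHom.comp
    ((Finsupp.mapDomain.addMonoidHom fun g : π => g⁻¹).comp
      MonoidAlgebra.coeffAddEquiv.toAddMonoidHom)

namespace FMaux

variable {π : Type*} [Group π] [Fintype π] {M : Type*} [AddCommGroup M]
  [Module (MonoidAlgebra ℤ π) M]

/-- Evaluation at the identity, as a `ℤ`-linear map on the group ring. -/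
def eL : MonoidAlgebra ℤ π →ₗ[ℤ] ℤ :=
  Finsupp.lapply 1 ∘ₗ (MonoidAlgebra.coeffLinearEquiv ℤ).toLinearMap

omit [Fintype π] in
lemma eL_rconj (u : MonoidAlgebra ℤ π) : eL (rconj u) = eL u := by
  show (Finsupp.mapDomain _ u.coeff) 1 = u.coeff 1
  simpa using Finsupp.mapDomain_apply (f := fun g : π => g⁻¹) (fun a b h => inv_injective h) u.coeff 1

/-- `M* → Hom_ℤ(M, ℤ)`, `f ↦ (m ↦ (f m) 1)`. -/
def eps : (M →ₗ[MonoidAlgebra ℤ π] MonoidAlgebra ℤ π) →ₗ[ℤ] (M →ₗ[ℤ] ℤ) where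
  toFun f := eL.comp (f.restrictScalars ℤ)
  map_add' f g := by ext m; simp
  map_smul' c f := by
    ext m
    simp only [LinearMap.coe_comp, Function.comp_apply, LinearMap.restrictScalars_apply,
      LinearMap.smul_apply, map_smul, RingHom.id_apply]

omit [Fintype π] in
theorem eps_ker : LinearMap.ker (eps (π := π) (M := M)) = ⊥ := by
  rw [LinearMap.ker_eq_bot']
  intro f hf
  have h1 : ∀ m, (f m).coeff 1 = 0 := fun m => LinearMap.congr_fun hf m
  refine LinearMap.ext fun m => MonoidAlgebra.coeff_injective <| Finsupp.ext fun g => ?_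
  have h2 := h1 ((MonoidAlgebra.single g⁻¹ (1:ℤ)) • m)
  rw [map_smul, smul_eq_mul, MonoidAlgebra.coeff_single_mul_apply] at h2
  simpa using h2

/-- `ℤπ ⊗ ℤπ → ℤ`, `u ⊗ v ↦ u 1 * v 1`. -/
def theta : (MonoidAlgebra ℤ π) ⊗[ℤ] (MonoidAlgebra ℤ π) →ₗ[ℤ] ℤ :=
  TensorProduct.lift ((LinearMap.mul ℤ ℤ).compl₁₂ eL eL)

omit [Fintype π] in
lemma theta_tmul (u v : MonoidAlgebra ℤ π) : theta (u ⊗ₜ[ℤ] v) = eL u * eL v := rfl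

/-- The map `F_M` as a `ℤ`-linear map. -/
def FL : ((M →ₗ[MonoidAlgebra ℤ π] MonoidAlgebra ℤ π) ⊗[ℤ]
    (M →ₗ[MonoidAlgebra ℤ π] MonoidAlgebra ℤ π)) →ₗ[ℤ]
    (M → M → MonoidAlgebra ℤ π ⊗[ℤ] MonoidAlgebra ℤ π) :=
  TensorProduct.lift (LinearMap.mk₂ ℤ
    (fun f h => fun m n => f n ⊗ₜ[ℤ] rconj (h m))
    (by intro f₁ f₂ h; funext m n
        simp [TensorProduct.add_tmul])
    (by intro c f h; funext m n
        simp only [LinearMap.smul_apply, Pi.smul_apply]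
        rw [TensorProduct.smul_tmul'])
    (by intro f h₁ h₂; funext m n
        simp [map_add, TensorProduct.tmul_add])
    (by intro c f h; funext m n
        simp only [LinearMap.smul_apply, Pi.smul_apply]
        rw [map_zsmul, TensorProduct.tmul_smul]))

omit [Fintype π] in
lemma FL_tmul (f h : M →ₗ[MonoidAlgebra ℤ π] MonoidAlgebra ℤ π) (m n : M) :
    FL (f ⊗ₜ[ℤ] h) m n = f n ⊗ₜ[ℤ] rconj (h m) := rfl

end FMaux

set_option maxHeartbeats 1000000 in
set_option synthInstance.maxHeartbeats 400000 in
/-- for a finite group `π` and a finitely generated left `ℤπ`-module `M` with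
`M* = Hom_{ℤπ}(M, ℤπ)`, the map `F_M : M* ⊗_ℤ M* → Hom_{ℤπ}(M, Hom_{ℤπ}(M, ℤπ ⊗_ℤ ℤπ))`,
`F_M(f ⊗ h)(m)(n) = f(n) ⊗ conj(h(m))`, is injective.  (Injectivity into the space of all
functions `M → M → ℤπ ⊗_ℤ ℤπ` is equivalent, since the values of `F_M` are such functions.) -/
theorem F_M_injective {π : Type*} [Group π] [Fintype π]
    {M : Type*} [AddCommGroup M] [Module (MonoidAlgebra ℤ π) M]
    [Module.Finite (MonoidAlgebra ℤ π) M] :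
    ∃ F : ((M →ₗ[MonoidAlgebra ℤ π] MonoidAlgebra ℤ π) ⊗[ℤ]
        (M →ₗ[MonoidAlgebra ℤ π] MonoidAlgebra ℤ π)) →+
        (M → M → MonoidAlgebra ℤ π ⊗[ℤ] MonoidAlgebra ℤ π),
      (∀ (f h : M →ₗ[MonoidAlgebra ℤ π] MonoidAlgebra ℤ π) (m n : M),
        F (f ⊗ₜ[ℤ] h) m n = f n ⊗ₜ[ℤ] rconj (h m)) ∧
      Function.Injective F := by
  classical
  refine ⟨FMaux.FL.toAddMonoidHom, fun f h m n => rfl, ?_⟩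
  -- it suffices to show that the kernel of FL is trivial
  suffices hker : ∀ x, FMaux.FL (π := π) (M := M) x = 0 → x = 0 by
    intro x y hxy
    have hxy' : FMaux.FL x = FMaux.FL y := hxy
    have : FMaux.FL (x - y) = 0 := by rw [map_sub, hxy', sub_self]
    exact sub_eq_zero.mp (hker _ this)
  intro x hFx
  -- M is a finitely generated abelian group
  haveI : Module.Finite ℤ (MonoidAlgebra ℤ π) := Module.Finite.equiv (MonoidAlgebra.coeffLinearEquiv ℤ).symm
  haveI : Module.Finite ℤ M := Module.Finite.trans (MonoidAlgebra ℤ π) M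
  obtain ⟨s, hs⟩ : ∃ s : Finset M, Submodule.span ℤ (s : Set M) = ⊤ :=
    Module.Finite.fg_top (R := ℤ) (M := M)
  -- embed the dual `M* = Hom_{ℤπ}(M, ℤπ)` into `s → ℤ`
  let ev : (M →ₗ[ℤ] ℤ) →ₗ[ℤ] (s → ℤ) :=
    { toFun := fun f i => f i
      map_add' := fun f g => rfl
      map_smul' := fun c f => rfl }
  have hev : Function.Injective ev := by
    intro f g h
    exact LinearMap.ext_on hs fun m hm => congrFun h ⟨m, hm⟩
  let Φ : (M →ₗ[MonoidAlgebra ℤ π] MonoidAlgebra ℤ π) →ₗ[ℤ] (s → ℤ) := ev ∘ₗ FMaux.eps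
  have hepsinj : Function.Injective (FMaux.eps (π := π) (M := M)) := by
    rw [← LinearMap.ker_eq_bot]; exact FMaux.eps_ker
  have hΦ : Function.Injective Φ := fun u v huv => hepsinj (hev huv)
  -- hence `M*` is a finite free abelian group
  let E := LinearEquiv.ofInjective Φ hΦ
  obtain ⟨k, bR⟩ := Submodule.basisOfPid (Pi.basisFun ℤ s) (LinearMap.range Φ)
  let b : Module.Basis (Fin k) ℤ (M →ₗ[MonoidAlgebra ℤ π] MonoidAlgebra ℤ π) := bR.map E.symm
  -- the images of the basis under `eps` are linearly independent
  let d : Fin k → (M →ₗ[ℤ] ℤ) := fun j => FMaux.eps (b j)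
  have hd : LinearIndependent ℤ d := b.linearIndependent.map' FMaux.eps FMaux.eps_ker
  -- expand `x` in the basis of the tensor product
  let T := Module.Basis.tensorProduct b b
  let a : Fin k × Fin k → ℤ := fun p => T.repr x p
  have hx : ∑ p : Fin k × Fin k, a p • (b p.1 ⊗ₜ[ℤ] b p.2) = x := by
    conv_rhs => rw [← T.sum_repr x]
    exact Finset.sum_congr rfl fun p _ => by
      rw [Module.Basis.tensorProduct_apply b b p.1 p.2]
  have hT : ∀ p : Fin k × Fin k, T p = b p.1 ⊗ₜ[ℤ] b p.2 :=
    fun p => Module.Basis.tensorProduct_apply b b p.1 p.2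
  -- the main computation
  have key : ∀ m n : M, ∑ p : Fin k × Fin k,
      a p * (FMaux.eL ((b p.1) n) * FMaux.eL ((b p.2) m)) = 0 := by
    intro m n
    have h0 : FMaux.theta (FMaux.FL x m n) = 0 := by rw [hFx]; simp
    rw [← hx, map_sum] at h0
    simp only [map_smul, Finset.sum_apply, Pi.smul_apply, FMaux.FL_tmul, map_sum,
      FMaux.theta_tmul, FMaux.eL_rconj, smul_eq_mul] at h0
    exact h0
  have key' : ∀ m n : M, ∑ p : Fin k × Fin k, a p * (d p.1 n * d p.2 m) = 0 := key
  have h2 : ∀ (n : M) (q : Fin k), ∑ j : Fin k, a (j, q) * d j n = 0 := by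
    intro n q
    have hsum : ∑ q' : Fin k, (∑ j : Fin k, a (j, q') * d j n) • d q' = 0 := by
      refine LinearMap.ext fun m => ?_
      have hk := key' m n
      rw [Fintype.sum_prod_type, Finset.sum_comm] at hk
      simp only [LinearMap.coe_sum, Finset.sum_apply, LinearMap.smul_apply, smul_eq_mul,
        Finset.sum_mul, LinearMap.zero_apply, mul_assoc]
      exact hk
    exact Fintype.linearIndependent_iff.mp hd _ hsum q
  have h3 : ∀ (q j : Fin k), a (j, q) = 0 := by
    intro q
    have hsum : ∑ j : Fin k, a (j, q) • d j = 0 := by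
      refine LinearMap.ext fun n => ?_
      simp only [LinearMap.coe_sum, Finset.sum_apply, LinearMap.smul_apply, smul_eq_mul,
        LinearMap.zero_apply]
      exact h2 n q
    exact fun j => Fintype.linearIndependent_iff.mp hd _ hsum j
  rw [← hx]
  refine Finset.sum_eq_zero fun p _ => ?_
  have hap : a p = 0 := h3 p.2 p.1
  rw [hap, zero_smul]
end
end

section
/- Let p : π → G be a surjective group homomorphism, where π is finitely generated and G is finitely presented. Then the kernel of p is finitely normally generated, i.e. there exists a finite subset S ⊆ ker(p) whose normal closure in π equals ker(p). -/
/-- if `p : π → G` is a surjective homomorphism from a finitely generated group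
onto a finitely presented group, then `ker p` is finitely normally generated: there is a finite
subset `S ⊆ ker p` whose normal closure in `π` is `ker p`. -/
theorem kernel_of_surjection_onto_finitely_presented_is_finitely_normally_generated
    {π G : Type*} [Group π] [Group G] [Group.FG π] (p : π →* G)
    (hp : Function.Surjective p)
    (hG : ∃ (n : ℕ) (rels : Set (FreeGroup (Fin n))),
      rels.Finite ∧ Nonempty (PresentedGroup rels ≃* G)) :
    ∃ S : Set π, S.Finite ∧ S ⊆ (p.ker : Set π) ∧ Subgroup.normalClosure S = p.ker := by
  classical
  obtain ⟨n, rels, hrels, ⟨e⟩⟩ := hG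
  obtain ⟨T, hTclos, hTfin⟩ := Group.fg_iff.mp ‹Group.FG π›
  -- the presenting map q : FreeGroup (Fin n) → G
  set q : FreeGroup (Fin n) →* G := e.toMonoidHom.comp (PresentedGroup.mk rels) with hq
  have hqsurj : Function.Surjective q := e.surjective.comp (PresentedGroup.mk_surjective rels)
  have hkerq : q.ker = Subgroup.normalClosure rels := by
    ext u
    rw [MonoidHom.mem_ker, hq, MonoidHom.comp_apply]
    rw [show (e.toMonoidHom (PresentedGroup.mk rels u) = 1) ↔ PresentedGroup.mk rels u = 1 from
      e.map_eq_one_iff]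
    exact QuotientGroup.eq_one_iff u
  -- lift q through p on generators
  set φ : FreeGroup (Fin n) →* π :=
    FreeGroup.lift (fun i => Function.surjInv hp (q (FreeGroup.of i))) with hφ
  have hpφ : p.comp φ = q := by
    apply FreeGroup.ext_hom
    intro i
    simp [hφ, Function.surjInv_eq hp]
  have hpφ' : ∀ w, p (φ w) = q w := fun w => DFunLike.congr_fun hpφ w
  -- for each generator of π, choose a word mapping to its image
  set w : π → FreeGroup (Fin n) := fun y => Function.surjInv hqsurj (p y) with hw
  have hqw : ∀ y, q (w y) = p y := fun y => Function.surjInv_eq hqsurj (p y)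
  -- the finite normally generating set
  set S : Set π := φ '' rels ∪ (fun y => y⁻¹ * φ (w y)) '' T with hS
  have hSfin : S.Finite := (hrels.image φ).union (hTfin.image _)
  have hSker : S ⊆ (p.ker : Set π) := by
    rintro x (⟨r, hr, rfl⟩ | ⟨y, hy, rfl⟩)
    · show p (φ r) = 1
      rw [hpφ']
      have : r ∈ q.ker := hkerq ▸ Subgroup.subset_normalClosure hr
      exact this
    · show p (y⁻¹ * φ (w y)) = 1
      rw [map_mul, map_inv, hpφ', hqw, inv_mul_cancel]
  refine ⟨S, hSfin, hSker, ?_⟩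
  set N := Subgroup.normalClosure S with hN
  have hNker : N ≤ p.ker :=
    Subgroup.normalClosure_le_normal hSker
  refine le_antisymm hNker ?_
  -- every element of π is congruent mod N to φ of some word
  have hcover : ∀ x : π, ∃ u : FreeGroup (Fin n), x⁻¹ * φ u ∈ N := by
    intro x
    have hx : x ∈ Subgroup.comap (QuotientGroup.mk' N)
        (((QuotientGroup.mk' N).comp φ).range) := by
      have hle : Subgroup.closure T ≤ Subgroup.comap (QuotientGroup.mk' N)
          (((QuotientGroup.mk' N).comp φ).range) := by
        refine (Subgroup.closure_le _).mpr ?_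
        intro y hy
        have hyN : y⁻¹ * φ (w y) ∈ N :=
          Subgroup.subset_normalClosure (Or.inr ⟨y, hy, rfl⟩)
        show y ∈ Subgroup.comap (QuotientGroup.mk' N) (((QuotientGroup.mk' N).comp φ).range)
        exact Subgroup.mem_comap.mpr ⟨w y, (QuotientGroup.eq.mpr hyN).symm⟩
      exact hle (hTclos.ge (Subgroup.mem_top x))
    obtain ⟨u, hu⟩ := hx
    exact ⟨u, QuotientGroup.eq.mp hu.symm⟩
  intro x hx
  obtain ⟨u, hu⟩ := hcover x
  -- then q u = 1 since p x = 1 and N ≤ ker p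
  have hqu : u ∈ q.ker := by
    have h1 : p (x⁻¹ * φ u) = 1 := hNker hu
    have h2 : p x = 1 := hx
    rw [map_mul, map_inv, h2, inv_one, one_mul, hpφ'] at h1
    exact h1
  -- so φ u ∈ normalClosure (φ '' rels) ≤ N
  have hφu : φ u ∈ N := by
    have hmono : Subgroup.normalClosure rels ≤
        Subgroup.comap φ (Subgroup.normalClosure (φ '' rels)) := by
      apply Subgroup.normalClosure_le_normal
      intro r hr
      exact Subgroup.subset_normalClosure ⟨r, hr, rfl⟩
    have := hmono (hkerq ▸ hqu)
    have h3 : φ u ∈ Subgroup.normalClosure (φ '' rels) := this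
    exact Subgroup.normalClosure_mono Set.subset_union_left h3
  have : x = φ u * (x⁻¹ * φ u)⁻¹ := by group
  rw [this]
  exact N.mul_mem hφu (N.inv_mem hu)
end
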